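/- Let t ∈ ℤ[1/2] be such that the field E := ℚ(√−7, √−t) ⊆ ℂ has degree 4 over ℚ and contains none of √3, √−1, √−3. Let T be a finite subset of {odd primes} ∪ {4}, let N = ∏_{m ∈ T} m, and let A := {σ ∈ Gal(E(ζ_N)/E) : σ(ζ_ℓ) ≠ ζ_ℓ for every ℓ ∈ T}. Then every fourth power of an element of Gal(E(ζ_N)/E) lies in the subgroup generated by A, i.e. Gal(E(ζ_N)/E)⁴ ⊆ ⟨A⟩. -/

import Mathlib

/-!
The Galois group `G = Gal(E(ζ_N)/E)` acts on `ζ_N` through `(ℤ/N)ˣ = ∏_{ℓ ∈ T} (ℤ/ℓ)ˣ`, and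
`τ ∈ A` means that every component of the image of `τ` is nontrivial.

Every square in `(ℤ/N)ˣ` is realised by `G`: as the cyclotomic polynomial is irreducible and
`E(ζ_N)/ℚ` is normal, any `x ∈ (ℤ/N)ˣ` is realised by some `γ ∈ Gal(E(ζ_N)/ℚ)`, and `γ²` fixes `E`
because `γ` can only change the signs of the square roots generating `E`. Since `(2ζ_3 + 1)² = -3`
and `ζ_4² = -1`, neither `ζ_3` nor `ζ_4` lies in `E`, so some `ρ ∈ G` moves both (a group is not
the union of two proper subgroups).

Given `σ`, choose for each `ℓ` a unit `y_ℓ` with `y_ℓ²ρ ≠ 1` and `σ⁴y_ℓ²ρ ≠ 1` in `(ℤ/ℓ)ˣ`: for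
`ℓ ≤ 5` this group has exponent dividing `4`, and for `ℓ ≥ 7` the map `y ↦ y²ρ` takes at least
three values. If `h ∈ G` acts as `y²ρ`, then `h` and `σ⁴h` lie in `A` and `σ⁴ = (σ⁴h)h⁻¹`.
-/

/-- The ring `ℤ[1/2]`, realized as the smallest subring of `ℚ` containing `1/2`. -/
def Zhalf : Subring ℚ := Subring.closure {(2 : ℚ)⁻¹}

open Polynomial IntermediateField

theorem Subgroup.exists_notMem_and_notMem {G : Type*} [Group G] {H K : Subgroup G}
    (hH : H ≠ ⊤) (hK : K ≠ ⊤) : ∃ g, g ∉ H ∧ g ∉ K := by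
  obtain ⟨a, haH⟩ := SetLike.exists_not_mem_of_ne_top H hH
  obtain ⟨b, hbK⟩ := SetLike.exists_not_mem_of_ne_top K hK
  by_cases haK : a ∈ K
  · by_cases hbH : b ∈ H
    · exact ⟨a * b, fun h => haH (by simpa using H.mul_mem h (H.inv_mem hbH)),
        fun h => hbK (by simpa using K.mul_mem (K.inv_mem haK) h)⟩
    · exact ⟨b, hbH, hbK⟩
  · exact ⟨a, haH, haK⟩

theorem Subgroup.exists_forall_notMem_of_card_le_two {G ι : Type*} [Group G] (H : ι → Subgroup G)
    {s : Finset ι} (hs : s.card ≤ 2) (hH : ∀ i ∈ s, H i ≠ ⊤) : ∃ g, ∀ i ∈ s, g ∉ H i := by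
  classical
  interval_cases h : s.card
  · exact ⟨1, by simp [Finset.card_eq_zero.mp h]⟩
  · obtain ⟨i, rfl⟩ := Finset.card_eq_one.mp h
    obtain ⟨g, hg⟩ := SetLike.exists_not_mem_of_ne_top _ (hH i (Finset.mem_singleton_self i))
    exact ⟨g, by simpa using hg⟩
  · obtain ⟨i, j, -, rfl⟩ := Finset.card_eq_two.mp h
    obtain ⟨g, hgi, hgj⟩ := exists_notMem_and_notMem (hH i (by simp)) (hH j (by simp))
    exact ⟨g, by simp [hgi, hgj]⟩

theorem FiniteField.exists_sq_mul_ne_and_ne {F : Type*} [Field F] [Finite F] (hF : 6 ≤ Nat.card F)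
    (r c d : Fˣ) : ∃ y : Fˣ, y ^ 2 * r ≠ c ∧ y ^ 2 * r ≠ d := by
  by_contra! h
  have hker : Nat.card (powMonoidHom 2 : Fˣ →* Fˣ).ker ≤ 2 := by
    have : (powMonoidHom 2 : Fˣ →* Fˣ).ker = rootsOfUnity 2 F := by
      ext y; simp [mem_rootsOfUnity]
    exact this ▸ card_rootsOfUnity F 2
  have hrange : Nat.card (powMonoidHom 2 : Fˣ →* Fˣ).range ≤ 2 := by
    have hsub : ((powMonoidHom 2 : Fˣ →* Fˣ).range : Set Fˣ) ⊆ {c * r⁻¹, d * r⁻¹} := by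
      rintro _ ⟨y, rfl⟩
      by_cases hc : y ^ 2 * r = c
      · simp [← hc]
      · simp [← h y hc]
    rw [← SetLike.coe_sort_coe, Nat.card_coe_set_eq]
    exact (Set.ncard_le_ncard hsub (Set.toFinite _)).trans
      ((Set.ncard_insert_le _ _).trans (by simp))
  have hcard : Nat.card Fˣ = _ := ((powMonoidHom 2 : Fˣ →* Fˣ).ker.card_mul_index).symm
  rw [Subgroup.index_ker, Nat.card_units] at hcard
  have := Nat.mul_le_mul hker hrange
  omega

theorem ZMod.exists_sq_mul_ne_one {ℓ : ℕ} (hℓ : ℓ.Prime ∧ ℓ ≠ 2 ∨ ℓ = 4) (g r : (ZMod ℓ)ˣ)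
    (hr : ℓ = 3 ∨ ℓ = 4 → r ≠ 1) : ∃ y, y ^ 2 * r ≠ 1 ∧ g ^ 4 * (y ^ 2 * r) ≠ 1 := by
  rcases hℓ with ⟨hp, h2⟩ | rfl
  · by_cases h7 : 7 ≤ ℓ
    · have : Fact ℓ.Prime := ⟨hp⟩
      obtain ⟨y, h1, h4⟩ := FiniteField.exists_sq_mul_ne_and_ne (by simp; omega) r 1 (g ^ 4)⁻¹
      exact ⟨y, h1, fun h => h4 (eq_inv_of_mul_eq_one_right h)⟩
    · have : ℓ = 3 ∨ ℓ = 5 := by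
        interval_cases ℓ <;> first | omega | exact absurd hp (by norm_num)
      rcases this with rfl | rfl <;> (revert g r; decide)
  · revert g r; decide

theorem Nat.coprime_of_prime_or_eq_four {a b : ℕ} (ha : a.Prime ∧ a ≠ 2 ∨ a = 4)
    (hb : b.Prime ∧ b ≠ 2 ∨ b = 4) (hab : a ≠ b) : a.Coprime b := by
  have h4 : ∀ p : ℕ, p.Prime → p ≠ 2 → p.Coprime 4 := fun p hp hp2 =>
    Nat.Coprime.pow_right 2 ((Nat.coprime_primes hp Nat.prime_two).mpr hp2)
  rcases ha with ⟨hpa, ha2⟩ | rfl <;> rcases hb with ⟨hpb, hb2⟩ | rfl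
  · exact (Nat.coprime_primes hpa hpb).mpr hab
  · exact h4 a hpa ha2
  · exact (h4 b hpb hb2).symm
  · exact absurd rfl hab

open scoped Function in
theorem ZMod.exists_unitsMap_eq {ι : Type*} [Fintype ι] {a : ι → ℕ}
    (hcop : Pairwise (Nat.Coprime on a)) (y : Π i, (ZMod (a i))ˣ) :
    ∃ x : (ZMod (∏ i, a i))ˣ, ∀ i,
      ZMod.unitsMap (Finset.dvd_prod_of_mem a (Finset.mem_univ i)) x = y i := by
  refine ⟨Units.map (ZMod.prodEquivPi a hcop).symm.toMonoidHom (MulEquiv.piUnits.symm y),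
    fun i => Units.ext ?_⟩
  change ZMod.castHom (Finset.dvd_prod_of_mem a (Finset.mem_univ i)) _
    ((ZMod.prodEquivPi a hcop).symm _) = _
  rw [← ZMod.prodEquivPi_apply a hcop, RingEquiv.apply_symm_apply]
  rfl

theorem pow_four_mem_closure_forall_ne_one {G ι : Type*} [Group G] {a : ι → ℕ}
    (ha : ∀ i, (a i).Prime ∧ a i ≠ 2 ∨ a i = 4) (φ : G →* Π i, (ZMod (a i))ˣ)
    (hsq : ∀ y, ∃ g, φ g = y ^ 2) (ρ : G) (hρ : ∀ i, a i = 3 ∨ a i = 4 → φ ρ i ≠ 1) (σ : G) :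
    σ ^ 4 ∈ Subgroup.closure {g | ∀ i, φ g i ≠ 1} := by
  choose y hy using fun i => ZMod.exists_sq_mul_ne_one (ha i) (φ σ i) (φ ρ i) (hρ i)
  obtain ⟨τ, hτ⟩ := hsq y
  have hh : τ * ρ ∈ {g | ∀ i, φ g i ≠ 1} := fun i => by
    simpa [hτ] using (hy i).1
  have hσh : σ ^ 4 * (τ * ρ) ∈ {g | ∀ i, φ g i ≠ 1} := fun i => by
    simpa [hτ] using (hy i).2
  rw [← mul_inv_cancel_right (σ ^ 4) (τ * ρ)]
  exact mul_mem (Subgroup.subset_closure hσh) (inv_mem (Subgroup.subset_closure hh))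

theorem IntermediateField.normal_adjoin_of_pow_eq_algebraMap {F K : Type*} [Field F] [Field K]
    [Algebra F K] {S : Set K}
    (hS : ∀ x ∈ S, ∃ n ≠ 0, ∃ q : F, x ^ n = algebraMap F K q ∧
      ∃ μ ∈ adjoin F S, IsPrimitiveRoot μ n) :
    Normal F (adjoin F S) := by
  have hgen : ∀ x ∈ S, IsIntegral F x ∧ ((minpoly F x).map (algebraMap F (adjoin F S))).Splits := by
    intro x hx
    obtain ⟨n, hn, q, hxq, μ, hμ, hμn⟩ := hS x hx
    have hroot : aeval x (X ^ n - C q) = 0 := by simp [hxq]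
    have hint : IsIntegral F x :=
      ⟨X ^ n - C q, monic_X_pow_sub_C q hn, by simpa [aeval_def] using hroot⟩
    refine ⟨hint, Splits.of_dvd ?_ ((monic_X_pow_sub_C q hn).map _).ne_zero
      (Polynomial.map_dvd _ (minpoly.dvd F x hroot))⟩
    have hμ' : IsPrimitiveRoot (⟨μ, hμ⟩ : adjoin F S) n :=
      IsPrimitiveRoot.coe_submonoidClass_iff.mp hμn
    simpa using X_pow_sub_C_splits_of_isPrimitiveRoot hμ' (α := ⟨x, subset_adjoin F S hx⟩)
      (Subtype.ext (by simpa using hxq))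
  have : Algebra.IsAlgebraic F (adjoin F S) := isAlgebraic_adjoin fun x hx => (hgen x hx).1
  refine normal_iff.mpr fun y => ⟨Algebra.IsIntegral.isIntegral y, ?_⟩
  rw [minpoly_eq]
  exact splits_of_mem_adjoin F K hgen y.2

namespace IsPrimitiveRoot

section AutToPow
variable {R L : Type*} [CommRing R] [CommRing L] [IsDomain L] [Algebra R L] {μ : L} {n : ℕ}
  [NeZero n]

theorem autToPow_eq_iff (hμ : IsPrimitiveRoot μ n) (f : L ≃ₐ[R] L) (x : (ZMod n)ˣ) :
    hμ.autToPow R f = x ↔ f μ = μ ^ (x : ZMod n).val := by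
  rw [← hμ.autToPow_spec R f]
  refine ⟨fun h => h ▸ rfl, fun h => Units.ext (ZMod.val_injective _ ?_)⟩
  exact hμ.pow_inj (ZMod.val_lt _) (ZMod.val_lt _) h

theorem unitsMap_autToPow_eq_one_iff (hμ : IsPrimitiveRoot μ n) {ℓ : ℕ} (hℓ : ℓ ∣ n)
    (f : L ≃ₐ[R] L) :
    ZMod.unitsMap hℓ (hμ.autToPow R f) = 1 ↔ f (μ ^ (n / ℓ)) = μ ^ (n / ℓ) := by
  have hℓ0 : ℓ ≠ 0 := by rintro rfl; exact NeZero.ne n (zero_dvd_iff.mp hℓ)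
  have hν : IsPrimitiveRoot (μ ^ (n / ℓ)) ℓ :=
    hμ.pow (Nat.pos_of_ne_zero (NeZero.ne n)) (Nat.div_mul_cancel hℓ).symm
  set k := (hμ.autToPow R f : ZMod n).val
  have hf : f (μ ^ (n / ℓ)) = (μ ^ (n / ℓ)) ^ k := by
    rw [map_pow, ← hμ.autToPow_spec R f, ← pow_mul, ← pow_mul, mul_comm]
  rw [hf, ← pow_one (μ ^ (n / ℓ)), ← pow_mul, one_mul, (hν.isOfFinOrder hℓ0).pow_eq_pow_iff_modEq,
    ← hν.eq_orderOf, ← ZMod.natCast_eq_natCast_iff, Units.ext_iff]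
  rw [ZMod.unitsMap_val, ← ZMod.natCast_val, Units.val_one, Nat.cast_one]

end AutToPow

variable {R : Type*} [CommRing R] [IsDomain R] {μ : R}

theorem sq_eq_neg_one_of_four (h : IsPrimitiveRoot μ 4) : μ ^ 2 = -1 :=
  (h.pow (by norm_num) (by norm_num : 4 = 2 * 2)).eq_neg_one_of_two_right

theorem two_mul_add_one_sq_eq_neg_three (h : IsPrimitiveRoot μ 3) : (2 * μ + 1) ^ 2 = -3 := by
  have := h.geom_sum_eq_zero (by norm_num)
  simp only [Finset.sum_range_succ, Finset.sum_range_zero] at this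
  linear_combination 4 * this

end IsPrimitiveRoot

theorem AlgEquiv.sq_apply_of_sq_eq_algebraMap {F K : Type*} [CommSemiring F] [CommRing K]
    [IsDomain K] [Algebra F K] (γ : K ≃ₐ[F] K) {w : K} {q : F} (hw : w ^ 2 = algebraMap F K q) :
    (γ ^ 2) w = w := by
  have : γ w ^ 2 = w ^ 2 := by rw [← map_pow, hw, AlgEquiv.commutes]
  rcases sq_eq_sq_iff_eq_or_eq_neg.mp this with h | h <;> simp [pow_two, h]

theorem exists_autToPow_eq_sq {Ω : Type*} [Field Ω] [CharZero Ω] {S : Set Ω}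
    (hS : ∀ s ∈ S, ∃ q : ℚ, s ^ 2 = algebraMap ℚ Ω q) {N : ℕ} [NeZero N] {ζ : Ω}
    (hζ : IsPrimitiveRoot (AdjoinSimple.gen (adjoin ℚ S) ζ) N) (x : (ZMod N)ˣ) :
    ∃ τ : (adjoin ℚ S)⟮ζ⟯ ≃ₐ[adjoin ℚ S] (adjoin ℚ S)⟮ζ⟯, hζ.autToPow (adjoin ℚ S) τ = x ^ 2 := by
  have hζ' : IsPrimitiveRoot ζ N := IsPrimitiveRoot.coe_submonoidClass_iff.mpr hζ
  have : Normal ℚ (adjoin ℚ S)⟮ζ⟯ := by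
    have h := normal_adjoin_of_pow_eq_algebraMap (F := ℚ) (S := S ∪ {ζ}) ?_
    · rwa [← adjoin_adjoin_left] at h
    rintro s (hs | hs)
    · obtain ⟨q, hq⟩ := hS s hs
      exact ⟨2, two_ne_zero, q, hq, -1, neg_mem (one_mem _), .neg_one 0 two_ne_zero.symm⟩
    · rw [Set.mem_singleton_iff.mp hs]
      exact ⟨N, NeZero.ne N, 1, by simpa using hζ'.pow_eq_one, ζ, subset_adjoin _ _ (by simp), hζ'⟩
  have hmin : minpoly ℚ (AdjoinSimple.gen (adjoin ℚ S) ζ ^ (x : ZMod N).val) =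
      minpoly ℚ (AdjoinSimple.gen (adjoin ℚ S) ζ) := by
    rw [← cyclotomic_eq_minpoly_rat hζ (NeZero.pos N),
      ← cyclotomic_eq_minpoly_rat (hζ.pow_of_coprime _ (ZMod.val_coe_unit_coprime x))
        (NeZero.pos N)]
  obtain ⟨γ, hγ⟩ := (Normal.minpoly_eq_iff_mem_orbit _).mp hmin
  have hγ2 : (γ ^ 2) (AdjoinSimple.gen (adjoin ℚ S) ζ) = _ :=
    (hζ.autToPow_eq_iff (γ ^ 2) (x ^ 2)).mp (by rw [map_pow, (hζ.autToPow_eq_iff γ x).mpr hγ])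
  have hfix (e : adjoin ℚ S) : (γ ^ 2) (algebraMap _ (adjoin ℚ S)⟮ζ⟯ e) = algebraMap _ _ e := by
    let ι := IsScalarTower.toAlgHom ℚ (adjoin ℚ S) (adjoin ℚ S)⟮ζ⟯
    refine AlgHom.congr_fun (adjoin_algHom_ext ℚ (φ₁ := (γ ^ 2).toAlgHom.comp ι) (φ₂ := ι)
      fun s hs => ?_) e
    obtain ⟨q, hq⟩ := hS s hs
    exact γ.sq_apply_of_sq_eq_algebraMap (q := q) (Subtype.ext hq)
  exact ⟨AlgEquiv.ofRingEquiv hfix, (hζ.autToPow_eq_iff _ _).mpr hγ2⟩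

theorem IsPrimitiveRoot.isGalois_adjoin (K : Type*) {Ω : Type*} [Field K] [CharZero K] [Field Ω]
    [Algebra K Ω] {N : ℕ} [NeZero N] {ζ : Ω} (hζ : IsPrimitiveRoot ζ N) : IsGalois K K⟮ζ⟯ := by
  have : FiniteDimensional K K⟮ζ⟯ :=
    adjoin.finiteDimensional (hζ.isIntegral (NeZero.pos N)).tower_top
  refine isGalois_iff.mpr ⟨inferInstance, normal_adjoin_of_pow_eq_algebraMap fun x hx => ?_⟩
  rw [Set.mem_singleton_iff.mp hx]
  exact ⟨N, NeZero.ne N, 1, by simpa using hζ.pow_eq_one, ζ, mem_adjoin_simple_self K ζ, hζ⟩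

theorem exists_algEquiv_apply_pow_div_ne {K Ω : Type*} [Field K] [CharZero K] [Field Ω]
    [Algebra K Ω] {N : ℕ} [NeZero N] {ζ : Ω} (hζ : IsPrimitiveRoot (AdjoinSimple.gen K ζ) N)
    (h1 : ∀ w : K, w ^ 2 ≠ -1) (h3 : ∀ w : K, w ^ 2 ≠ -3) :
    ∃ ρ : Gal(K⟮ζ⟯/K), ∀ ℓ ∈ ({3, 4} : Finset ℕ), ℓ ∣ N →
      ρ (AdjoinSimple.gen K ζ ^ (N / ℓ)) ≠ AdjoinSimple.gen K ζ ^ (N / ℓ) := by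
  have hζ' : IsPrimitiveRoot ζ N := IsPrimitiveRoot.coe_submonoidClass_iff.mpr hζ
  have : FiniteDimensional K K⟮ζ⟯ :=
    adjoin.finiteDimensional (hζ'.isIntegral (NeZero.pos N)).tower_top
  have := hζ'.isGalois_adjoin K
  have hmove : ∀ ℓ ∈ ({3, 4} : Finset ℕ).filter (· ∣ N),
      MulAction.stabilizer Gal(K⟮ζ⟯/K) (AdjoinSimple.gen K ζ ^ (N / ℓ)) ≠ ⊤ := by
    intro ℓ hℓ htop
    rw [Finset.mem_filter] at hℓ
    have hbot : AdjoinSimple.gen K ζ ^ (N / ℓ) ∈ (⊥ : IntermediateField K K⟮ζ⟯) :=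
      (IsGalois.mem_bot_iff_fixed _).mpr fun f => (htop ▸ Subgroup.mem_top f :)
    obtain ⟨w, hw⟩ := IntermediateField.mem_bot.mp hbot
    have hw' : IsPrimitiveRoot w ℓ := by
      refine .of_map_of_injective (f := algebraMap K K⟮ζ⟯) ?_ (algebraMap K _).injective
      rw [hw]
      exact hζ.pow (NeZero.pos N) (Nat.div_mul_cancel hℓ.2).symm
    rcases Finset.mem_insert.mp hℓ.1 with rfl | hℓ4
    · exact h3 _ hw'.two_mul_add_one_sq_eq_neg_three
    · rw [Finset.mem_singleton.mp hℓ4] at hw'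
      exact h1 _ hw'.sq_eq_neg_one_of_four
  obtain ⟨ρ, hρ⟩ := Subgroup.exists_forall_notMem_of_card_le_two _
    ((Finset.card_filter_le _ _).trans Finset.card_le_two) hmove
  exact ⟨ρ, fun ℓ hℓ hdvd => hρ ℓ (Finset.mem_filter.mpr ⟨hℓ, hdvd⟩)⟩

theorem pow_four_mem_closure_forall_apply_ne {Ω : Type*} [Field Ω] [CharZero Ω] {S : Set Ω}
    (hS : ∀ s ∈ S, ∃ q : ℚ, s ^ 2 = algebraMap ℚ Ω q)
    (h1 : ∀ w ∈ adjoin ℚ S, w ^ 2 ≠ -1) (h3 : ∀ w ∈ adjoin ℚ S, w ^ 2 ≠ -3)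
    {T : Finset ℕ} (hT : ∀ ℓ ∈ T, ℓ.Prime ∧ ℓ ≠ 2 ∨ ℓ = 4) {N : ℕ} (hN : N = ∏ ℓ ∈ T, ℓ)
    {ζ : Ω} (hζ : IsPrimitiveRoot (AdjoinSimple.gen (adjoin ℚ S) ζ) N)
    (σ : Gal((adjoin ℚ S)⟮ζ⟯/adjoin ℚ S)) :
    σ ^ 4 ∈ Subgroup.closure {τ | ∀ ℓ ∈ T, τ (AdjoinSimple.gen (adjoin ℚ S) ζ ^ (N / ℓ)) ≠
      AdjoinSimple.gen (adjoin ℚ S) ζ ^ (N / ℓ)} := by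
  rw [← Finset.prod_coe_sort] at hN
  subst hN
  have : NeZero (∏ ℓ : T, (ℓ : ℕ)) := ⟨Finset.prod_ne_zero_iff.mpr fun ℓ _ => by
    rcases hT ℓ ℓ.2 with ⟨hp, -⟩ | h4
    exacts [hp.ne_zero, by omega]⟩
  have hdvd (ℓ : T) : (ℓ : ℕ) ∣ ∏ ℓ : T, (ℓ : ℕ) := Finset.dvd_prod_of_mem _ (Finset.mem_univ ℓ)
  let φ := MonoidHom.pi fun ℓ : T => (ZMod.unitsMap (hdvd ℓ)).comp (hζ.autToPow (adjoin ℚ S))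
  have hsq : ∀ y, ∃ τ, φ τ = y ^ 2 := by
    intro y
    obtain ⟨x, hx⟩ := ZMod.exists_unitsMap_eq (a := ((↑) : T → ℕ)) (fun a b hab =>
      Nat.coprime_of_prime_or_eq_four (hT a a.2) (hT b b.2) (Subtype.coe_injective.ne hab)) y
    obtain ⟨τ, hτ⟩ := exists_autToPow_eq_sq hS hζ x
    refine ⟨τ, funext fun ℓ => ?_⟩
    change ZMod.unitsMap _ (hζ.autToPow _ τ) = _
    rw [hτ, map_pow, hx]
    rfl
  obtain ⟨ρ, hρ⟩ := exists_algEquiv_apply_pow_div_ne hζ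
    (fun w hw => h1 w w.2 (by rw [← IntermediateField.coe_pow, hw]; rfl))
    (fun w hw => h3 w w.2 (by rw [← IntermediateField.coe_pow, hw]; rfl))
  refine Subgroup.closure_mono (fun τ hτ ℓ hℓ => ?_)
    (pow_four_mem_closure_forall_ne_one (a := ((↑) : T → ℕ)) (fun ℓ => hT ℓ ℓ.2) φ hsq ρ
      (fun ℓ hℓ => ?_) σ)
  · exact mt (hζ.unitsMap_autToPow_eq_one_iff _ τ).mpr (hτ ⟨ℓ, hℓ⟩)
  · exact mt (hζ.unitsMap_autToPow_eq_one_iff _ ρ).mp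
      (hρ ℓ (by rcases hℓ with h | h <;> simp [h]) (hdvd ℓ))

theorem stmt12_general (t : ↥Zhalf)
    (z7 zt : ℂ) (hz7 : z7 ^ 2 = -7) (hzt : zt ^ 2 = -((t : ℚ) : ℂ))
    (E : IntermediateField ℚ ℂ) (hE : E = IntermediateField.adjoin ℚ {z7, zt})
    (hm1 : ∀ w ∈ E, w ^ 2 ≠ -1) (hm3 : ∀ w ∈ E, w ^ 2 ≠ -3)
    (T : Finset ℕ) (hT : ∀ ℓ ∈ T, (Nat.Prime ℓ ∧ ℓ ≠ 2) ∨ ℓ = 4)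
    (N : ℕ) (hN : N = ∏ m ∈ T, m)
    (ζ : ℂ) (hζ : IsPrimitiveRoot ζ N) :
    ∀ σ : (↥(IntermediateField.adjoin ↥E {ζ}) ≃ₐ[↥E] ↥(IntermediateField.adjoin ↥E {ζ})),
      σ ^ 4 ∈ Subgroup.closure
        {τ : (↥(IntermediateField.adjoin ↥E {ζ}) ≃ₐ[↥E] ↥(IntermediateField.adjoin ↥E {ζ})) |
          ∀ ℓ ∈ T, ∀ h : ζ ^ (N / ℓ) ∈ IntermediateField.adjoin ↥E {ζ},
            ((τ ⟨ζ ^ (N / ℓ), h⟩ : ↥(IntermediateField.adjoin ↥E {ζ})) : ℂ) ≠ ζ ^ (N / ℓ)} := by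
  intro σ
  subst hE
  have hS : ∀ s ∈ ({z7, zt} : Set ℂ), ∃ q : ℚ, s ^ 2 = algebraMap ℚ ℂ q := by
    rintro s (rfl | rfl)
    exacts [⟨-7, by simp [hz7]⟩, ⟨-t, by simp [hzt]⟩]
  refine Subgroup.closure_mono ?_ (pow_four_mem_closure_forall_apply_ne hS hm1 hm3 hT hN
    (IsPrimitiveRoot.coe_submonoidClass_iff.mp hζ) σ)
  exact fun τ hτ ℓ hℓ _ hfix => hτ ℓ hℓ (Subtype.ext hfix)

theorem stmt12 (t : ↥Zhalf)
    (z7 zt : ℂ) (hz7 : z7 ^ 2 = -7) (hzt : zt ^ 2 = -((t : ℚ) : ℂ))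
    (E : IntermediateField ℚ ℂ) (hE : E = IntermediateField.adjoin ℚ {z7, zt})
    (hdeg : Module.finrank ℚ ↥E = 4)
    (h3 : ∀ w ∈ E, w ^ 2 ≠ 3) (hm1 : ∀ w ∈ E, w ^ 2 ≠ -1) (hm3 : ∀ w ∈ E, w ^ 2 ≠ -3)
    (T : Finset ℕ) (hT : ∀ ℓ ∈ T, (Nat.Prime ℓ ∧ ℓ ≠ 2) ∨ ℓ = 4)
    (N : ℕ) (hN : N = ∏ m ∈ T, m)
    (ζ : ℂ) (hζ : IsPrimitiveRoot ζ N) :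
    ∀ σ : (↥(IntermediateField.adjoin ↥E {ζ}) ≃ₐ[↥E] ↥(IntermediateField.adjoin ↥E {ζ})),
      σ ^ 4 ∈ Subgroup.closure
        {τ : (↥(IntermediateField.adjoin ↥E {ζ}) ≃ₐ[↥E] ↥(IntermediateField.adjoin ↥E {ζ})) |
          ∀ ℓ ∈ T, ∀ h : ζ ^ (N / ℓ) ∈ IntermediateField.adjoin ↥E {ζ},
            ((τ ⟨ζ ^ (N / ℓ), h⟩ : ↥(IntermediateField.adjoin ↥E {ζ})) : ℂ) ≠ ζ ^ (N / ℓ)} :=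
  stmt12_general t z7 zt hz7 hzt E hE hm1 hm3 T hT N hN ζ hζ
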